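/- In a continuous Petri net, if a set of places S is a trap that is marked at marking m (some place of S has positive token mass), then after any finite firing sequence S remains marked; i.e., the total token mass on a marked trap stays strictly positive under finitely many continuous firings. -/

import Mathlib

open Relation Filter

/-! ### Boolean networks and their semantics -/

abbrev Config (n : ℕ) := Fin n → Bool
abbrev BN (n : ℕ) := Config n → Fin n → Bool

def Delta {n : ℕ} (x y : Config n) : Set (Fin n) := {i | x i ≠ y i}

def fa {n : ℕ} (f : BN n) (x y : Config n) : Prop :=
  ∃ i, Delta x y = {i} ∧ f x i = y i

def syn {n : ℕ} (f : BN n) (x y : Config n) : Prop := ∀ i, f x i = y i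

def ga {n : ℕ} (f : BN n) (x y : Config n) : Prop := ∀ i ∈ Delta x y, f x i = y i

/-! ### Most permissive semantics -/

inductive MPV where
  | b : Bool → MPV
  | up : MPV
  | down : MPV
deriving DecidableEq

abbrev MPConfig (n : ℕ) := Fin n → MPV

def toMP {n : ℕ} (x : Config n) : MPConfig n := fun i => .b (x i)

def beta {n : ℕ} (xh : MPConfig n) : Set (Config n) :=
  {x | ∀ i v, xh i = .b v → x i = v}

def mpStep {n : ℕ} (f : BN n) (xh yh : MPConfig n) : Prop :=
  ∃ i, (∀ j, j ≠ i → xh j = yh j) ∧ xh i ≠ yh i ∧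
    ((xh i = .up ∧ yh i = .b true) ∨
     (xh i = .down ∧ yh i = .b false) ∨
     (xh i ≠ .b true ∧ yh i = .up ∧ ∃ x ∈ beta xh, f x i = true) ∨
     (xh i ≠ .b false ∧ yh i = .down ∧ ∃ x ∈ beta xh, f x i = false))

def mp {n : ℕ} (f : BN n) (x y : Config n) : Prop :=
  ReflTransGen (mpStep f) (toMP x) (toMP y)

/-! ### Petri nets (discrete and continuous) -/

structure Net (P T : Type) where
  wPT : P → T → ℕ
  wTP : T → P → ℕ

def dfire {P T : Type} (N : Net P T) (t : T) (M M' : P → ℕ) : Prop :=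
  (∀ p, N.wPT p t ≤ M p) ∧ ∀ p, M' p = M p - N.wPT p t + N.wTP t p

def dReach {P T : Type} (N : Net P T) : (P → ℕ) → (P → ℕ) → Prop :=
  ReflTransGen (fun M M' => ∃ t, dfire N t M M')

def cfire {P T : Type} (N : Net P T) (t : T) (α : ℝ) (m m' : P → ℝ) : Prop :=
  0 ≤ α ∧ (∀ p, α * N.wPT p t ≤ m p) ∧
    ∀ p, m' p = m p - α * N.wPT p t + α * N.wTP t p

def cReach {P T : Type} (N : Net P T) : (P → ℝ) → (P → ℝ) → Prop :=
  ReflTransGen (fun m m' => ∃ t α, cfire N t α m m')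

def limReach {P T : Type} (N : Net P T) (m m' : P → ℝ) : Prop :=
  ∃ ms : ℕ → P → ℝ, ms 0 = m ∧
    (∀ k, ∃ t α, cfire N t α (ms k) (ms (k+1))) ∧
    Tendsto ms atTop (nhds m')

def IsTrap {P T : Type} (N : Net P T) (S : Set P) : Prop :=
  ∀ t, (∃ p ∈ S, 0 < N.wPT p t) → ∃ p ∈ S, 0 < N.wTP t p

def enabPos {P T : Type} (N : Net P T) (t : T) (m : P → ℝ) : Prop :=
  ∀ p, 0 < N.wPT p t → 0 < m p

def enabGe {P T : Type} (N : Net P T) (t : T) (m : P → ℝ) (c : ℝ) : Prop :=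
  ∀ p, 0 < N.wPT p t → c * N.wPT p t ≤ m p

/-! ### Petri net encoding of Boolean networks -/

abbrev Clause (n : ℕ) := Fin n → Option Bool

def satC {n : ℕ} (z : Config n) (C : Clause n) : Prop :=
  ∀ j v, C j = some v → z j = v

structure ETrans (n : ℕ) where
  i : Fin n
  s : Bool
  C : Clause n

abbrev EPlace (n : ℕ) := Fin n × Bool

def encNet (n : ℕ) : Net (EPlace n) (ETrans n) where
  wPT := fun p t =>
    if p.1 = t.i then (if p.2 = !t.s then 1 else 0)
    else (if t.C p.1 = some p.2 then 1 else 0)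
  wTP := fun t p =>
    if p.1 = t.i then (if p.2 = t.s then 1 else 0)
    else (if t.C p.1 = some p.2 then 1 else 0)

def mu {n : ℕ} (xh : MPConfig n) : Set (EPlace n → ℝ) :=
  {m | (∀ p, 0 ≤ m p) ∧ ∀ i,
    m (i, false) + m (i, true) = 1 ∧
    (∀ v, xh i = .b v → m (i, v) = 1) ∧
    ((xh i = .up ∨ xh i = .down) →
      0 < m (i, false) ∧ m (i, false) < 1 ∧ 0 < m (i, true) ∧ m (i, true) < 1)}

noncomputable def canon {n : ℕ} (xh : MPConfig n) : EPlace n → ℝ := fun p =>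
  match xh p.1 with
  | .b v => if p.2 = v then 1 else 0
  | _ => 1/2

def validT {n : ℕ} (D : Fin n → Bool → Set (Clause n)) (t : ETrans n) : Prop :=
  t.C ∈ D t.i t.s

def IsDNF {n : ℕ} (f : BN n) (D : Fin n → Bool → Set (Clause n)) : Prop :=
  (∀ i s z, (∃ C ∈ D i s, satC z C) ↔ (z i = !s ∧ f z i = s)) ∧
  (∀ i s C, C ∈ D i s → C i = some (!s))

def cReachG {P T : Type} (N : Net P T) (good : T → Prop) :
    (P → ℝ) → (P → ℝ) → Prop :=
  ReflTransGen (fun m m' => ∃ t, good t ∧ ∃ α, cfire N t α m m')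

def climReachG {P T : Type} (N : Net P T) (good : T → Prop) (m m' : P → ℝ) : Prop :=
  ∃ ms : ℕ → P → ℝ, ms 0 = m ∧
    (∀ k, ∃ t, good t ∧ ∃ α, cfire N t α (ms k) (ms (k+1))) ∧
    Tendsto ms atTop (nhds m')

/-! A firing of `t` at rate `α` can drain a place `p` only if `α * W(p,t) = m p > 0`, so `t`
really consumes from `p`; if `p` lies in a trap `S`, then `t` puts `α * W(t,q) > 0` tokens into
some `q ∈ S`. Either way `S` stays marked after each single firing. -/

namespace cfire

variable {P T : Type} {N : Net P T} {t : T} {α : ℝ} {m m' : P → ℝ}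

lemma sub_input_le (hf : cfire N t α m m') (p : P) : m p - α * N.wPT p t ≤ m' p := by
  obtain ⟨hα, -, heq⟩ := hf
  rw [heq p]
  linarith [mul_nonneg hα (Nat.cast_nonneg (α := ℝ) (N.wTP t p))]

lemma output_le (hf : cfire N t α m m') (p : P) : α * N.wTP t p ≤ m' p := by
  obtain ⟨-, hen, heq⟩ := hf
  rw [heq p]
  linarith [hen p]

end cfire

lemma IsTrap.marked_of_cfire {P T : Type} {N : Net P T} {S : Set P} {t : T} {α : ℝ}
    {m m' : P → ℝ} (htrap : IsTrap N S) (hf : cfire N t α m m')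
    (hmarked : ∃ p ∈ S, 0 < m p) : ∃ p ∈ S, 0 < m' p := by
  obtain ⟨p, hpS, hp⟩ := hmarked
  by_cases hlt : α * N.wPT p t < m p
  · exact ⟨p, hpS, by linarith [hf.sub_input_le p]⟩
  have hdrain : 0 < α * N.wPT p t := by linarith [hf.2.1 p]
  have hα : 0 < α := pos_of_mul_pos_left hdrain (Nat.cast_nonneg _)
  have hw : 0 < N.wPT p t := by exact_mod_cast pos_of_mul_pos_right hdrain hf.1
  obtain ⟨q, hqS, hq⟩ := htrap t ⟨p, hpS, hw⟩
  have hout : 0 < α * N.wTP t q := mul_pos hα (by exact_mod_cast hq)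
  exact ⟨q, hqS, hout.trans_le (hf.output_le q)⟩

theorem trap_stays_marked_continuous_general {P T : Type} (N : Net P T) (S : Set P)
    (m m' : P → ℝ) (htrap : IsTrap N S)
    (hmarked : ∃ p ∈ S, 0 < m p) (hreach : cReach N m m') :
    ∃ p ∈ S, 0 < m' p := by
  induction hreach with
  | refl => exact hmarked
  | tail _ hstep ih =>
    obtain ⟨t, α, hf⟩ := hstep
    exact htrap.marked_of_cfire hf ih

/-- in a continuous Petri net, a marked trap remains marked
after any finite firing sequence. -/
theorem trap_stays_marked_continuous {P T : Type} (N : Net P T) (S : Set P)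
    (m m' : P → ℝ) (hm : ∀ p, 0 ≤ m p) (htrap : IsTrap N S)
    (hmarked : ∃ p ∈ S, 0 < m p) (hreach : cReach N m m') :
    ∃ p ∈ S, 0 < m' p :=
  trap_stays_marked_continuous_general N S m m' htrap hmarked hreach
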